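/- arXiv:2109.08459 — 2 statements merged into one kernel-verified Lean document; each statement's English description precedes it below -/
import Mathlib

section
/- Let T > 0, let N ≥ 1 be an integer, and let f, g : ℝ → ℂ be smooth and NT-periodic. Then the subharmonic Parseval identity holds: ∫₀^{NT} conj(f(x)) g(x) dx = (1/(N T²)) Σ_{ξ∈Ω_N} ∫₀^T conj(B_T(f)(ξ, x)) B_T(g)(ξ, x) dx. -/
/-- Fourier transform on the torus: `ĝ(z) = ∫_{-NT/2}^{NT/2} e^{-izy} g(y) dy`. -/
noncomputable def fourierT (T : ℝ) (N : ℕ) (g : ℝ → ℂ) (z : ℝ) : ℂ :=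
  ∫ y in (-(N * T) / 2)..((N * T) / 2), Complex.exp (-Complex.I * z * y) * g y

/-- The `T`-periodic Bloch transform
`B_T(g)(ξ,x) = Σ_{ℓ∈ℤ} e^{2πiℓx/T} ĝ(ξ + 2πℓ/T)`. -/
noncomputable def blochT (T : ℝ) (N : ℕ) (g : ℝ → ℂ) (ξ x : ℝ) : ℂ :=
  ∑' ℓ : ℤ, Complex.exp (2 * (Real.pi : ℂ) * Complex.I * (ℓ : ℂ) * (x : ℂ) / (T : ℂ)) *
    fourierT T N g (ξ + 2 * Real.pi * ℓ / T)

/-- Integer indices `k` with `-N/2 ≤ k < N/2`, parametrizing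
`Ω_N = {2πk/(NT) : -N/2 ≤ k < N/2}`. -/
noncomputable def kRange (N : ℕ) : Finset ℤ := Finset.Ico (-((N : ℤ) / 2)) ((N : ℤ) - (N : ℤ) / 2)

/-- The Bloch frequency `ξ_k = 2πk/(NT) ∈ Ω_N`. -/
noncomputable def freq (T : ℝ) (N : ℕ) (k : ℤ) : ℝ := 2 * Real.pi * k / (N * T)

open Complex MeasureTheory intervalIntegral Real Finset

lemma one_le_inftyC : (1 : WithTop ℕ∞) ≤ ((⊤:ℕ∞) : WithTop ℕ∞) := by exact_mod_cast le_top

noncomputable def fcoef (T : ℝ) (h : ℝ → ℂ) (n : ℤ) : ℂ :=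
  (1 / (T : ℂ)) * ∫ y in (0:ℝ)..T, Complex.exp (-(2 * (π : ℂ) * I * n * y) / T) * h y

lemma periodic_deriv' {h : ℝ → ℂ} (hh : ContDiff ℝ (⊤:ℕ∞) h) {T : ℝ}
    (hper : Function.Periodic h T) : Function.Periodic (deriv h) T := by
  intro x
  have : (fun y => h (y + T)) = h := funext fun y => hper y
  calc deriv h (x + T) = deriv (fun y => h (y + T)) x := (deriv_comp_add_const h T x).symm
  _ = deriv h x := by rw [this]

/-- fourierCoeff of a smooth periodic function matches `fcoef`. -/
lemma fourierCoeff_eq_fcoef {T : ℝ} [hT : Fact (0 < T)] (h : ℝ → ℂ)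
    (hper : Function.Periodic h T) :
    ∀ n : ℤ, fourierCoeff (hper.lift) n = fcoef T h n := by
  intro n
  rw [fourierCoeff_eq_intervalIntegral _ n 0]
  simp only [zero_add, fcoef]
  rw [Complex.real_smul]
  congr 1
  · push_cast; ring
  · apply intervalIntegral.integral_congr
    intro y _
    show (fourier (-n)) (y : AddCircle T) • hper.lift (y : AddCircle T) = _
    rw [smul_eq_mul, Function.Periodic.lift_coe, fourier_coe_apply]
    congr 1
    push_cast
    ring

/-- relate fourierCoeff of the lift to `fourierCoeffOn`. -/
lemma fourierCoeff_lift_eq_On {T : ℝ} [hT : Fact (0 < T)] (h : ℝ → ℂ)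
    (hper : Function.Periodic h T) (n : ℤ) :
    fourierCoeff (hper.lift) n = fourierCoeffOn (by simpa using hT.out : (0:ℝ) < 0 + T) h n := by
  rw [fourierCoeff_eq_intervalIntegral _ n 0, fourierCoeffOn_eq_integral]
  simp only [zero_add, sub_zero]
  norm_num

/-- bound on fourier coefficients. -/
lemma norm_fcoef_le {T : ℝ} (hT : 0 < T) (h : ℝ → ℂ) (hc : Continuous h) (n : ℤ) :
    ‖fcoef T h n‖ ≤ (1 / T) * ∫ y in (0:ℝ)..T, ‖h y‖ := by
  rw [fcoef, norm_mul]
  gcongr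
  · simp [abs_of_pos hT]
  · calc ‖∫ y in (0:ℝ)..T, Complex.exp (-(2 * (π : ℂ) * I * n * y) / T) * h y‖
        ≤ ∫ y in (0:ℝ)..T, ‖Complex.exp (-(2 * (π : ℂ) * I * n * y) / T) * h y‖ :=
      intervalIntegral.norm_integral_le_integral_norm hT.le
    _ = ∫ y in (0:ℝ)..T, ‖h y‖ := by
      apply intervalIntegral.integral_congr
      intro y _
      show ‖Complex.exp (-(2 * (π : ℂ) * I * n * y) / T) * h y‖ = ‖h y‖
      rw [norm_mul]
      have : ‖Complex.exp (-(2 * (π : ℂ) * I * n * y) / T)‖ = 1 := by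
        rw [Complex.norm_exp]
        have : (-(2 * (π : ℂ) * I * n * y) / T).re = 0 := by
          simp [Complex.div_re]
        rw [this, Real.exp_zero]
      rw [this, one_mul]
    _ ≤ _ := le_refl _

/-- integration by parts: for n ≠ 0, `fcoef h n = T/(2πin) * fcoef (deriv h) n`. -/
lemma fcoef_deriv {T : ℝ} (hT : 0 < T) (h : ℝ → ℂ) (hh : ContDiff ℝ (⊤:ℕ∞) h)
    (hper : Function.Periodic h T) {n : ℤ} (hn : n ≠ 0) :
    fcoef T h n = (T : ℂ) / (2 * π * I * n) * fcoef T (deriv h) n := by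
  haveI : Fact (0 < T) := ⟨hT⟩
  have hab : (0:ℝ) < 0 + T := by simpa using hT
  have hperd := periodic_deriv' hh hper
  have h1 : fcoef T h n = fourierCoeffOn hab h n := by
    rw [← fourierCoeff_eq_fcoef h hper, fourierCoeff_lift_eq_On]
  have h2 : fcoef T (deriv h) n = fourierCoeffOn hab (deriv h) n := by
    rw [← fourierCoeff_eq_fcoef _ hperd, fourierCoeff_lift_eq_On]
  rw [h1, h2]
  rw [fourierCoeffOn_of_hasDerivAt hab hn
    (fun x _ => (hh.differentiable (by simp) x).hasDerivAt)
    ((hh.continuous_deriv one_le_inftyC).intervalIntegrable 0 (0+T))]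
  have hz : h (0 + T) - h 0 = 0 := by rw [hper 0, sub_self]
  rw [hz, mul_zero, zero_sub]
  have hn' : (n : ℂ) ≠ 0 := Int.cast_ne_zero.mpr hn
  have hπ : (π : ℂ) ≠ 0 := Complex.ofReal_ne_zero.mpr Real.pi_ne_zero
  push_cast
  field_simp
  ring

lemma summable_fcoef {T : ℝ} (hT : 0 < T) (h : ℝ → ℂ) (hh : ContDiff ℝ (⊤:ℕ∞) h)
    (hper : Function.Periodic h T) : Summable (fcoef T h) := by
  have hh1 : ContDiff ℝ (⊤:ℕ∞) (deriv h) := (contDiff_infty_iff_deriv.mp hh).2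
  have hperd := periodic_deriv' hh hper
  set K : ℝ := (1 / T) * ∫ y in (0:ℝ)..T, ‖deriv (deriv h) y‖ with hK
  apply Summable.of_norm_bounded_eventually (g := fun n : ℤ => (T / (2*π))^2 * K * (1 / (n:ℝ)^2))
  · exact ((summable_one_div_int_pow.mpr one_lt_two).mul_left _)
  · filter_upwards [Set.Finite.eventually_cofinite_notMem (Set.finite_singleton (0 : ℤ))] with n hn
    have hn : n ≠ 0 := by simpa using hn
    have hn' : ((n:ℝ)) ≠ 0 := Int.cast_ne_zero.mpr hn
    have hnorm : ‖(T : ℂ) / (2 * (π:ℂ) * I * n)‖ = T / (2 * π * |(n:ℝ)|) := by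
      rw [norm_div, norm_mul, norm_mul, norm_mul]
      simp [abs_of_pos hT, abs_of_pos Real.pi_pos]
    rw [fcoef_deriv hT h hh hper hn, fcoef_deriv hT (deriv h) hh1 hperd hn,
      norm_mul, norm_mul, ← mul_assoc, hnorm]
    have hbd : ‖fcoef T (deriv (deriv h)) n‖ ≤ K :=
      norm_fcoef_le hT _ (hh1.continuous_deriv one_le_inftyC) n
    have h2π : 0 < 2 * π := by positivity
    have habs : 0 < |(n:ℝ)| := abs_pos.mpr hn'
    calc T / (2 * π * |(n:ℝ)|) * (T / (2 * π * |(n:ℝ)|)) * ‖fcoef T (deriv (deriv h)) n‖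
        ≤ T / (2 * π * |(n:ℝ)|) * (T / (2 * π * |(n:ℝ)|)) * K := by
          apply mul_le_mul_of_nonneg_left hbd
          positivity
      _ = (T / (2*π))^2 * K * (1 / (n:ℝ)^2) := by
          have : ((n:ℝ))^2 = |(n:ℝ)|^2 := (_root_.sq_abs _).symm
          field_simp
          rw [this]
          ring

/-- Pointwise Fourier inversion for smooth periodic function. -/
lemma hasSum_fourier_smooth {T : ℝ} (hT : 0 < T) (h : ℝ → ℂ) (hh : ContDiff ℝ (⊤:ℕ∞) h)
    (hper : Function.Periodic h T) (x : ℝ) :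
    HasSum (fun n : ℤ => Complex.exp (2 * (π : ℂ) * I * n * x / T) * fcoef T h n) (h x) := by
  haveI : Fact (0 < T) := ⟨hT⟩
  let F : C(AddCircle T, ℂ) := ⟨hper.lift, continuous_coinduced_dom.mpr hh.continuous⟩
  have hFcoeff : ∀ n : ℤ, fourierCoeff (⇑F) n = fcoef T h n := fourierCoeff_eq_fcoef h hper
  have hsummable : Summable (fourierCoeff (⇑F)) := by
    rw [funext hFcoeff]; exact summable_fcoef hT h hh hper
  have hs := has_pointwise_sum_fourier_series_of_summable hsummable (x : AddCircle T)
  have hFx : F (x : AddCircle T) = h x := Function.Periodic.lift_coe hper x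
  rw [hFx] at hs
  refine hs.congr_fun fun n => ?_
  rw [hFcoeff n, smul_eq_mul, mul_comm, fourier_coe_apply]

/-- Periodization `H(y) = Σ_{j<N} e^{-iξ(y+jT)} g(y+jT)`. -/
noncomputable def periodize (T : ℝ) (N : ℕ) (ξ : ℝ) (g : ℝ → ℂ) (y : ℝ) : ℂ :=
  ∑ j ∈ Finset.range N, Complex.exp (-Complex.I * (ξ:ℂ) * ((y:ℂ) + (j:ℂ) * (T:ℂ))) *
    g (y + (j:ℝ) * T)

lemma contDiff_periodize {T : ℝ} {N : ℕ} {ξ : ℝ} {g : ℝ → ℂ}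
    (hg : ContDiff ℝ (⊤:ℕ∞) g) : ContDiff ℝ (⊤:ℕ∞) (periodize T N ξ g) := by
  apply ContDiff.sum
  intro j _
  apply ContDiff.mul
  · exact Complex.contDiff_exp.comp
      (contDiff_const.mul (Complex.ofRealCLM.contDiff.add contDiff_const))
  · exact hg.comp (contDiff_id.add contDiff_const)

lemma periodize_periodic {T : ℝ} {N : ℕ} {ξ : ℝ} {g : ℝ → ℂ}
    (hξ : Complex.exp (-Complex.I * (ξ:ℂ) * ((N:ℂ) * (T:ℂ))) = 1)
    (hgper : ∀ x : ℝ, g (x + N * T) = g x) :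
    Function.Periodic (periodize T N ξ g) T := by
  intro y
  unfold periodize
  have key : ∀ j : ℕ, Complex.exp (-Complex.I * (ξ:ℂ) * (((y:ℝ)+T:ℝ) + (j:ℂ) * T)) *
      g ((y + T) + (j:ℝ) * T)
      = Complex.exp (-Complex.I * (ξ:ℂ) * ((y:ℂ) + ((j+1:ℕ):ℂ) * T)) * g (y + ((j+1:ℕ):ℝ) * T) := by
    intro j
    push_cast
    ring_nf
  calc ∑ j ∈ Finset.range N, Complex.exp (-Complex.I * (ξ:ℂ) * ((((y+T:ℝ)):ℂ) + (j:ℂ) * T)) *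
        g ((y+T) + (j:ℝ) * T)
      = ∑ j ∈ Finset.range N, Complex.exp (-Complex.I * (ξ:ℂ) * ((y:ℂ) + ((j+1:ℕ):ℂ) * T)) *
        g (y + ((j+1:ℕ):ℝ) * T) := by
        apply Finset.sum_congr rfl
        intro j _
        push_cast
        ring_nf
    _ = ∑ j ∈ Finset.range N, Complex.exp (-Complex.I * (ξ:ℂ) * ((y:ℂ) + (j:ℂ) * T)) *
        g (y + (j:ℝ) * T) := by
        set φ : ℕ → ℂ := fun j => Complex.exp (-Complex.I * (ξ:ℂ) * ((y:ℂ) + (j:ℂ) * T)) *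
          g (y + (j:ℝ) * T) with hφdef
        have h1 := Finset.sum_range_succ' φ N
        have h2 := Finset.sum_range_succ φ N
        have hφ : φ N = φ 0 := by
          simp only [hφdef]
          push_cast
          rw [show (y:ℂ) + ((N:ℂ)) * T = ((y:ℂ) + 0 * T) + (N:ℂ)*T by ring,
            show y + (N:ℝ) * T = (y + 0 * T) + (N:ℝ)*T by ring]
          rw [mul_add, Complex.exp_add, hgper]
          rw [show -Complex.I * (ξ:ℂ) * ((N:ℂ)*(T:ℂ)) = -Complex.I * (ξ:ℂ) * ((N:ℂ) * (T:ℂ)) by ring, hξ]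
          ring
        have h3 := h1.symm.trans h2
        rw [hφ] at h3
        exact add_right_cancel h3

lemma integral_split {φ : ℝ → ℂ} (hφ : Continuous φ) (T : ℝ) (N : ℕ) :
    ∫ y in (0:ℝ)..(N*T), φ y = ∑ j ∈ Finset.range N, ∫ y in (0:ℝ)..T, φ (y + j*T) := by
  have h := intervalIntegral.sum_integral_adjacent_intervals
    (a := fun j : ℕ => (j:ℝ)*T) (μ := MeasureTheory.volume) (f := φ) (n := N)
    (fun k _ => hφ.intervalIntegrable _ _)
  simp only [Nat.cast_zero, zero_mul] at h
  rw [← h]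
  apply Finset.sum_congr rfl
  intro j _
  rw [intervalIntegral.integral_comp_add_right φ ((j:ℝ)*T)]
  congr 1
  · ring
  · push_cast; ring

lemma fourierT_eq {T : ℝ} (hT : 0 < T) {N : ℕ} (hN : 1 ≤ N) {ξ : ℝ} {g : ℝ → ℂ}
    (hg : Continuous g)
    (hξ : Complex.exp (-Complex.I * (ξ:ℂ) * ((N:ℂ) * (T:ℂ))) = 1)
    (hgper : ∀ x : ℝ, g (x + N * T) = g x) (ℓ : ℤ) :
    fourierT T N g (ξ + 2 * π * ℓ / T) =
      ∫ y in (0:ℝ)..T, Complex.exp (-(2 * (π:ℂ) * Complex.I * ℓ * y) / T) * periodize T N ξ g y := by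
  set z : ℝ := ξ + 2 * π * ℓ / T with hz
  set φ : ℝ → ℂ := fun y => Complex.exp (-Complex.I * (z:ℂ) * (y:ℂ)) * g y with hφdef
  have hφc : Continuous φ := by
    apply Continuous.mul
    · exact Complex.continuous_exp.comp (by continuity)
    · exact hg
  have hNT : (0:ℝ) < N * T := by positivity
  have hT' : (T:ℂ) ≠ 0 := Complex.ofReal_ne_zero.mpr hT.ne'
  -- exp(-I z NT) = 1
  have hzper : Complex.exp (-Complex.I * (z:ℂ) * ((N:ℂ) * T)) = 1 := by
    have : -Complex.I * (z:ℂ) * ((N:ℂ) * T) =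
        -Complex.I * (ξ:ℂ) * ((N:ℂ) * T) + (-(ℓ * N) : ℤ) * (2 * (π:ℂ) * Complex.I) := by
      rw [hz]
      push_cast
      field_simp
      ring
    rw [this, Complex.exp_add, hξ, Complex.exp_int_mul_two_pi_mul_I]
    ring
  -- φ is NT-periodic
  have hφper : Function.Periodic φ (N * T) := by
    intro y
    simp only [hφdef]
    rw [hgper]
    congr 1
    rw [show ((y + N*T : ℝ):ℂ) = (y:ℂ) + (N:ℂ)*T by push_cast; ring, mul_add, Complex.exp_add,
      hzper, mul_one]
  -- reduce to ∫₀^{NT}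
  have step1 : fourierT T N g z = ∫ y in (0:ℝ)..(N*T), φ y := by
    unfold fourierT
    rw [show ((N:ℝ)*T)/2 = -((N:ℝ)*T)/2 + N*T by ring]
    rw [hφper.intervalIntegral_add_eq (-((N:ℝ)*T)/2) 0, zero_add]
  rw [step1, integral_split hφc T N]
  rw [← intervalIntegral.integral_finset_sum]
  · apply intervalIntegral.integral_congr
    intro y _
    show ∑ j ∈ Finset.range N, φ (y + j*T) = _
    simp only [periodize]
    rw [Finset.mul_sum]
    apply Finset.sum_congr rfl
    intro j _
    simp only [hφdef]
    rw [← mul_assoc]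
    congr 1
    rw [← Complex.exp_add]
    have : -Complex.I * (z:ℂ) * (((y + j*T:ℝ)):ℂ) =
        (-(2 * (π:ℂ) * Complex.I * ℓ * y) / T + -Complex.I * (ξ:ℂ) * ((y:ℂ) + (j:ℂ)*T))
          + (-(ℓ * j) : ℤ) * (2 * (π:ℂ) * Complex.I) := by
      rw [hz]
      push_cast
      field_simp
      ring
    rw [this, Complex.exp_add, Complex.exp_int_mul_two_pi_mul_I, mul_one]
  · intro j _
    have : Continuous fun y : ℝ => φ (y + (j:ℝ)*T) :=
      hφc.comp (continuous_id.add continuous_const)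
    exact this.intervalIntegrable _ _

lemma exp_freq_NT {T : ℝ} (hT : 0 < T) {N : ℕ} (hN : 1 ≤ N) (k : ℤ) (c : ℂ) :
    Complex.exp (c * ((freq T N k : ℝ):ℂ) * ((N:ℂ) * (T:ℂ))) = Complex.exp (c * (2 * (π:ℂ) * k)) := by
  congr 1
  have hN' : ((N:ℂ)) ≠ 0 := Nat.cast_ne_zero.mpr (by omega)
  have hT' : ((T:ℂ)) ≠ 0 := Complex.ofReal_ne_zero.mpr hT.ne'
  unfold freq
  push_cast
  field_simp

lemma exp_neg_I_freq {T : ℝ} (hT : 0 < T) {N : ℕ} (hN : 1 ≤ N) (k : ℤ) :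
    Complex.exp (-Complex.I * ((freq T N k : ℝ):ℂ) * ((N:ℂ) * (T:ℂ))) = 1 := by
  rw [exp_freq_NT hT hN k (-Complex.I)]
  rw [show -Complex.I * (2 * (π:ℂ) * k) = (-k : ℤ) * (2 * (π:ℂ) * Complex.I) by push_cast; ring]
  exact Complex.exp_int_mul_two_pi_mul_I _

/-- Step A: the Bloch transform at frequency `ξ_k` is `T` times the twisted periodization. -/
lemma blochT_eq {T : ℝ} (hT : 0 < T) {N : ℕ} (hN : 1 ≤ N) {g : ℝ → ℂ}
    (hg : ContDiff ℝ (⊤:ℕ∞) g) (hgper : ∀ x : ℝ, g (x + N * T) = g x) (k : ℤ) (x : ℝ) :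
    blochT T N g (freq T N k) x = (T:ℂ) * periodize T N (freq T N k) g x := by
  set ξ := freq T N k with hξdef
  have hξ := exp_neg_I_freq hT hN k
  have hper : Function.Periodic (periodize T N ξ g) T := periodize_periodic hξ hgper
  have hsmooth : ContDiff ℝ (⊤:ℕ∞) (periodize T N ξ g) := contDiff_periodize hg
  have hinv := hasSum_fourier_smooth hT _ hsmooth hper x
  have hinv2 := hinv.mul_left (T:ℂ)
  have hT' : ((T:ℂ)) ≠ 0 := Complex.ofReal_ne_zero.mpr hT.ne'
  have hterm : ∀ ℓ : ℤ,
      (T:ℂ) * (Complex.exp (2 * (π:ℂ) * Complex.I * ℓ * x / T) * fcoef T (periodize T N ξ g) ℓ) =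
      Complex.exp (2 * (π : ℂ) * Complex.I * (ℓ : ℂ) * (x : ℂ) / (T : ℂ)) *
        fourierT T N g (ξ + 2 * π * ℓ / T) := by
    intro ℓ
    rw [fourierT_eq hT hN hg.continuous hξ hgper ℓ]
    rw [fcoef]
    field_simp
    rfl
  have hsum2 : HasSum (fun ℓ : ℤ => Complex.exp (2 * (π : ℂ) * Complex.I * (ℓ : ℂ) * (x : ℂ) / (T : ℂ)) *
      fourierT T N g (ξ + 2 * π * ℓ / T)) ((T:ℂ) * periodize T N ξ g x) := by
    exact hinv2.congr_fun fun ℓ => (hterm ℓ).symm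
  unfold blochT
  exact hsum2.tsum_eq

lemma sum_Ico_succ_top_int (a : ℤ) (n : ℕ) (f : ℤ → ℂ) :
    ∑ k ∈ Finset.Ico a (a+n+1), f k = (∑ k ∈ Finset.Ico a (a+n), f k) + f (a+n) := by
  have hu : Finset.Ico a (a+n) ∪ Finset.Ico (a+(n:ℤ)) (a+n+1) = Finset.Ico a (a+n+1) :=
    Finset.Ico_union_Ico_eq_Ico (by omega) (by omega)
  rw [← hu, Finset.sum_union (Finset.Ico_disjoint_Ico_consecutive a (a+n) (a+n+1))]
  congr 1
  rw [show (Finset.Ico (a+(n:ℤ)) (a+n+1)) = {a+(n:ℤ)} by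
    ext x; simp only [Finset.mem_Ico, Finset.mem_singleton]; omega]
  simp

lemma sum_zpow_Ico (ω : ℂ) (hω : ω ≠ 0) (a : ℤ) (n : ℕ) :
    ∑ k ∈ Finset.Ico a (a + n), ω ^ k = ω ^ a * ∑ i ∈ Finset.range n, ω ^ (i:ℕ) := by
  induction n with
  | zero => simp
  | succ n ih =>
    push_cast
    rw [show a + ((n:ℤ)+1) = a + n + 1 by ring]
    rw [sum_Ico_succ_top_int a n (fun k => ω ^ k), ih, Finset.sum_range_succ, mul_add]
    congr 1
    rw [zpow_add₀ hω, zpow_natCast]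

lemma sum_exp_kRange {N : ℕ} (hN : 1 ≤ N) (m : ℤ) (hm : m.natAbs < N) :
    ∑ k ∈ kRange N, Complex.exp (2 * (π:ℂ) * Complex.I * k * m / N) =
      if m = 0 then (N:ℂ) else 0 := by
  have hN' : ((N:ℂ)) ≠ 0 := Nat.cast_ne_zero.mpr (by omega)
  by_cases hm0 : m = 0
  · subst hm0
    simp only [if_pos rfl]
    have : ∀ k ∈ kRange N, Complex.exp (2 * (π:ℂ) * Complex.I * k * (0:ℤ) / N) = 1 := by
      intro k _; norm_num
    rw [Finset.sum_congr rfl this, Finset.sum_const]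
    have hcard : (kRange N).card = N := by
      unfold kRange
      rw [Int.card_Ico]
      omega
    rw [hcard]
    simp
  · rw [if_neg hm0]
    set ω : ℂ := Complex.exp (2 * (π:ℂ) * Complex.I * m / N) with hω
    have hω0 : ω ≠ 0 := Complex.exp_ne_zero _
    have hterm : ∀ k : ℤ, Complex.exp (2 * (π:ℂ) * Complex.I * k * m / N) = ω ^ k := by
      intro k
      rw [hω, ← Complex.exp_int_mul]
      congr 1
      ring
    have hωN : ω ^ (N:ℕ) = 1 := by
      rw [hω, ← Complex.exp_nat_mul]
      rw [show (N:ℂ) * (2 * (π:ℂ) * Complex.I * m / N) = m * (2 * (π:ℂ) * Complex.I) by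
        field_simp]
      exact Complex.exp_int_mul_two_pi_mul_I m
    have hω1 : ω ≠ 1 := by
      intro hcontra
      rw [hω, Complex.exp_eq_one_iff] at hcontra
      obtain ⟨n, hn⟩ := hcontra
      have h2πI : (2:ℂ) * (π:ℂ) * Complex.I ≠ 0 := by
        simp [Complex.ofReal_ne_zero.mpr Real.pi_ne_zero, Complex.I_ne_zero, two_ne_zero]
      have hmc : (m:ℂ) = (n:ℂ) * N := by
        field_simp at hn
        linear_combination hn
      have hmn : m = n * N := by exact_mod_cast hmc
      have hn0 : n ≠ 0 := by rintro rfl; simp at hmn; exact hm0 hmn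
      have h1 : m.natAbs = n.natAbs * N := by
        rw [hmn, Int.natAbs_mul, Int.natAbs_natCast]
      have h2 : 1 ≤ n.natAbs := by omega
      have h3 : N ≤ n.natAbs * N := Nat.le_mul_of_pos_left N (by omega)
      omega
    rw [Finset.sum_congr rfl (fun k _ => hterm k)]
    unfold kRange
    rw [show ((N:ℤ) - (N:ℤ)/2) = -((N:ℤ)/2) + N by omega]
    rw [sum_zpow_Ico ω hω0]
    rw [geom_sum_eq hω1, hωN]
    simp

lemma conj_term_mul {T : ℝ} (hT : 0 < T) {N : ℕ} (hN : 1 ≤ N) (k : ℤ) (f g : ℝ → ℂ)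
    (j j' : ℕ) (x : ℝ) :
    (starRingEnd ℂ) (Complex.exp (-Complex.I * ((freq T N k : ℝ):ℂ) * ((x:ℂ)+(j:ℂ)*(T:ℂ))) * f (x+(j:ℝ)*T)) *
      (Complex.exp (-Complex.I * ((freq T N k : ℝ):ℂ) * ((x:ℂ)+(j':ℂ)*(T:ℂ))) * g (x+(j':ℝ)*T))
    = Complex.exp (2*(π:ℂ)*Complex.I*(k:ℂ)*((((j:ℤ)-(j':ℤ)):ℤ):ℂ)/(N:ℂ)) *
      ((starRingEnd ℂ) (f (x+(j:ℝ)*T)) * g (x+(j':ℝ)*T)) := by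
  have hN' : ((N:ℂ)) ≠ 0 := Nat.cast_ne_zero.mpr (by omega)
  have hT' : ((T:ℂ)) ≠ 0 := Complex.ofReal_ne_zero.mpr hT.ne'
  rw [map_mul]
  have hconj : (starRingEnd ℂ) (Complex.exp (-Complex.I * ((freq T N k : ℝ):ℂ) * ((x:ℂ)+(j:ℂ)*(T:ℂ))))
      = Complex.exp (Complex.I * ((freq T N k : ℝ):ℂ) * ((x:ℂ)+(j:ℂ)*(T:ℂ))) := by
    rw [← Complex.exp_conj]
    congr 1
    simp only [map_mul, map_add, map_neg, Complex.conj_I, Complex.conj_ofReal, map_natCast]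
    ring
  rw [hconj]
  rw [show ∀ a b c d : ℂ, a * b * (c * d) = (a * c) * (b * d) from fun a b c d => by ring]
  congr 1
  rw [← Complex.exp_add]
  congr 1
  unfold freq
  push_cast
  field_simp
  ring

/-- The subharmonic Parseval identity:
`∫₀^{NT} conj(f) g = (1/(NT²)) Σ_{ξ∈Ω_N} ∫₀^T conj(B_T(f)(ξ,·)) B_T(g)(ξ,·)`. -/
theorem subharmonic_parseval (T : ℝ) (hT : 0 < T) (N : ℕ) (hN : 1 ≤ N)
    (f g : ℝ → ℂ) (hf : ContDiff ℝ (⊤ : ℕ∞) f) (hg : ContDiff ℝ (⊤ : ℕ∞) g)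
    (hfper : ∀ x : ℝ, f (x + N * T) = f x) (hgper : ∀ x : ℝ, g (x + N * T) = g x) :
    (∫ x in (0:ℝ)..(N * T), (starRingEnd ℂ) (f x) * g x) =
      (1 / ((N : ℂ) * (T : ℂ) ^ 2)) *
        ∑ k ∈ kRange N,
          ∫ x in (0:ℝ)..T,
            (starRingEnd ℂ) (blochT T N f (freq T N k) x) * blochT T N g (freq T N k) x := by
  have hfc : ContDiff ℝ (⊤:ℕ∞) f := hf.of_le (by simp)
  have hgc : ContDiff ℝ (⊤:ℕ∞) g := hg.of_le (by simp)
  have hT' : ((T:ℂ)) ≠ 0 := Complex.ofReal_ne_zero.mpr hT.ne'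
  have hN' : ((N:ℂ)) ≠ 0 := Nat.cast_ne_zero.mpr (by omega)
  set I2 : ℕ → ℕ → ℂ := fun j j' =>
    ∫ x in (0:ℝ)..T, (starRingEnd ℂ) (f (x + (j:ℝ)*T)) * g (x + (j':ℝ)*T) with hI2
  -- LHS
  have hLHS : (∫ x in (0:ℝ)..(N * T), (starRingEnd ℂ) (f x) * g x)
      = ∑ j ∈ Finset.range N, I2 j j := by
    have hc : Continuous fun x : ℝ => (starRingEnd ℂ) (f x) * g x :=
      ((Complex.continuous_conj.comp hfc.continuous)).mul hgc.continuous
    rw [integral_split hc T N]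
  -- continuity facts for integrability
  have hcont : ∀ (j j' : ℕ), Continuous fun x : ℝ =>
      (starRingEnd ℂ) (f (x + (j:ℝ)*T)) * g (x + (j':ℝ)*T) := by
    intro j j'
    exact ((Complex.continuous_conj.comp (hfc.continuous.comp
      (continuous_id.add continuous_const)))).mul
      (hgc.continuous.comp (continuous_id.add continuous_const))
  -- per-k computation
  have hk : ∀ k ∈ kRange N,
      (∫ x in (0:ℝ)..T,
        (starRingEnd ℂ) (blochT T N f (freq T N k) x) * blochT T N g (freq T N k) x)
      = (T:ℂ)^2 * ∑ j ∈ Finset.range N, ∑ j' ∈ Finset.range N,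
          Complex.exp (2*(π:ℂ)*Complex.I*(k:ℂ)*((((j:ℤ)-(j':ℤ)):ℤ):ℂ)/(N:ℂ)) * I2 j j' := by
    intro k _
    have hpt : ∀ x : ℝ,
        (starRingEnd ℂ) (blochT T N f (freq T N k) x) * blochT T N g (freq T N k) x
        = (T:ℂ)^2 * ∑ j ∈ Finset.range N, ∑ j' ∈ Finset.range N,
            Complex.exp (2*(π:ℂ)*Complex.I*(k:ℂ)*((((j:ℤ)-(j':ℤ)):ℤ):ℂ)/(N:ℂ)) *
              ((starRingEnd ℂ) (f (x+(j:ℝ)*T)) * g (x+(j':ℝ)*T)) := by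
      intro x
      rw [blochT_eq hT hN hfc hfper k x, blochT_eq hT hN hgc hgper k x]
      rw [map_mul, Complex.conj_ofReal]
      rw [show ∀ a b c : ℂ, (a * b) * (a * c) = a^2 * (b * c) from fun a b c => by ring]
      congr 1
      unfold periodize
      rw [map_sum, Finset.sum_mul_sum]
      apply Finset.sum_congr rfl
      intro j _
      apply Finset.sum_congr rfl
      intro j' _
      exact conj_term_mul hT hN k f g j j' x
    rw [intervalIntegral.integral_congr (g := fun x => (T:ℂ)^2 *
      ∑ j ∈ Finset.range N, ∑ j' ∈ Finset.range N,
        Complex.exp (2*(π:ℂ)*Complex.I*(k:ℂ)*((((j:ℤ)-(j':ℤ)):ℤ):ℂ)/(N:ℂ)) *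
          ((starRingEnd ℂ) (f (x+(j:ℝ)*T)) * g (x+(j':ℝ)*T))) (fun x _ => hpt x)]
    rw [intervalIntegral.integral_const_mul]
    congr 1
    rw [intervalIntegral.integral_finset_sum]
    · apply Finset.sum_congr rfl
      intro j _
      rw [intervalIntegral.integral_finset_sum]
      · apply Finset.sum_congr rfl
        intro j' _
        rw [intervalIntegral.integral_const_mul]
      · intro j' _
        exact ((continuous_const.mul (hcont j j')).intervalIntegrable _ _)
    · intro j _
      apply Continuous.intervalIntegrable
      apply continuous_finset_sum
      intro j' _
      exact continuous_const.mul (hcont j j')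
  rw [Finset.sum_congr rfl hk, hLHS, ← Finset.mul_sum]
  -- swap the k-sum inside
  rw [Finset.sum_comm]
  have hswap : ∀ j ∈ Finset.range N,
      (∑ k ∈ kRange N, ∑ j' ∈ Finset.range N,
        Complex.exp (2*(π:ℂ)*Complex.I*(k:ℂ)*((((j:ℤ)-(j':ℤ)):ℤ):ℂ)/(N:ℂ)) * I2 j j')
      = (N:ℂ) * I2 j j := by
    intro j hj
    rw [Finset.sum_comm]
    have hj' : ∀ j' ∈ Finset.range N,
        (∑ k ∈ kRange N,
          Complex.exp (2*(π:ℂ)*Complex.I*(k:ℂ)*((((j:ℤ)-(j':ℤ)):ℤ):ℂ)/(N:ℂ)) * I2 j j')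
        = (if j' = j then (N:ℂ) else 0) * I2 j j' := by
      intro j' hj'
      rw [← Finset.sum_mul]
      congr 1
      rw [sum_exp_kRange hN ((j:ℤ)-(j':ℤ)) (by
        simp only [Finset.mem_range] at hj hj'
        omega)]
      by_cases h : j' = j
      · subst h; simp
      · rw [if_neg, if_neg h]
        simp only [Finset.mem_range] at hj hj'
        omega
    rw [Finset.sum_congr rfl hj']
    simp only [ite_mul, zero_mul]
    rw [Finset.sum_ite_eq' (Finset.range N) j (fun j' => (N:ℂ) * I2 j j'), if_pos hj]
  rw [Finset.sum_congr rfl hswap, ← Finset.mul_sum]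
  field_simp
end

section
/- Let ε, δ, c, δM ∈ ℝ, let N ≥ 1 be an integer, and let ū : ℝ → ℝ be a smooth solution of the profile ODE −c ū′ + ε ū‴ + δ(ū″ + ū⁗) + ū ū′ = 0. Let u : ℝ × ℝ → ℝ be smooth and satisfy the KdV/KS equation in the frame moving with speed c: ∂_t u − c ∂_x u + ε ∂_x³ u + δ(∂_x² u + ∂_x⁴ u) + u ∂_x u = 0 everywhere. Let γ : ℝ → ℝ and ψ : ℝ × ℝ → ℝ be smooth with ∂_x ψ(x,t) < 1 for all (x,t), and define the perturbation v(x,t) := u(x + (δM)t − γ(t)/N − ψ(x,t), t) − δM − ū(x). Then, writing w := v + ū (a function of (x,t)) and J := 1/(1 − ∂_x ψ), the following quasilinear perturbation equation holds at every (x,t): (1 − ∂_x ψ) ∂_t v + (γ′(t)/N + ∂_t ψ) ∂_x w − c ∂_x w + ε ∂_x(J ∂_x(J ∂_x w)) + δ ∂_x(J ∂_x w) + δ ∂_x(J ∂_x(J ∂_x(J ∂_x w))) + w ∂_x w = 0. In particular, all terms involving the Galilean boost parameter δM cancel. -/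
/-- The nonlinear perturbation `v(x,t) = u(x + (δM)t - γ(t)/N - ψ(x,t), t) - δM - ub(x)`. -/
noncomputable def pert (u : ℝ → ℝ → ℝ) (ub : ℝ → ℝ) (γ : ℝ → ℝ) (ψ : ℝ → ℝ → ℝ)
    (δM : ℝ) (N : ℕ) : ℝ → ℝ → ℝ :=
  fun x t => u (x + δM * t - γ t / N - ψ x t) t - δM - ub x

/-- `w = v + ub` as a function of `(x,t)`. -/
noncomputable def wfun (u : ℝ → ℝ → ℝ) (ub : ℝ → ℝ) (γ : ℝ → ℝ) (ψ : ℝ → ℝ → ℝ)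
    (δM : ℝ) (N : ℕ) : ℝ → ℝ → ℝ :=
  fun x t => pert u ub γ ψ δM N x t + ub x

/-- `J = 1/(1 - ∂_x ψ)`. -/
noncomputable def Jfun (ψ : ℝ → ℝ → ℝ) : ℝ → ℝ → ℝ :=
  fun x t => 1 / (1 - deriv (fun y => ψ y t) x)

/-- Quasilinear equation satisfied by the perturbation `v` of a traveling wave `ub` of
the KdV/KS equation in the co-moving frame, after modulating by a uniform translation
`γ(t)/N`, a spatio-temporal phase `ψ(x,t)`, and a Galilean boost `δM`; all terms from
the boost parameter `δM` cancel. -/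
theorem nonlinear_perturbation_equation (ε δ c δM : ℝ) (N : ℕ) (hN : 1 ≤ N)
    (ub : ℝ → ℝ) (hub : ContDiff ℝ (⊤ : ℕ∞) ub)
    (hprof : ∀ x : ℝ,
      -c * deriv ub x + ε * iteratedDeriv 3 ub x
        + δ * (iteratedDeriv 2 ub x + iteratedDeriv 4 ub x) + ub x * deriv ub x = 0)
    (u : ℝ → ℝ → ℝ) (hu : ContDiff ℝ (⊤ : ℕ∞) (Function.uncurry u))
    (heq : ∀ x t : ℝ,
      deriv (fun τ => u x τ) t - c * deriv (fun y => u y t) x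
        + ε * iteratedDeriv 3 (fun y => u y t) x
        + δ * (iteratedDeriv 2 (fun y => u y t) x + iteratedDeriv 4 (fun y => u y t) x)
        + u x t * deriv (fun y => u y t) x = 0)
    (γ : ℝ → ℝ) (hγ : ContDiff ℝ (⊤ : ℕ∞) γ)
    (ψ : ℝ → ℝ → ℝ) (hψ : ContDiff ℝ (⊤ : ℕ∞) (Function.uncurry ψ))
    (hψx : ∀ x t : ℝ, deriv (fun y => ψ y t) x < 1) :
    ∀ x t : ℝ,
      (1 - deriv (fun y => ψ y t) x) * deriv (fun τ => pert u ub γ ψ δM N x τ) t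
        + (deriv γ t / N + deriv (fun τ => ψ x τ) t) * deriv (fun y => wfun u ub γ ψ δM N y t) x
        - c * deriv (fun y => wfun u ub γ ψ δM N y t) x
        + ε * deriv (fun y => Jfun ψ y t *
            deriv (fun z => Jfun ψ z t * deriv (fun r => wfun u ub γ ψ δM N r t) z) y) x
        + δ * deriv (fun y => Jfun ψ y t * deriv (fun z => wfun u ub γ ψ δM N z t) y) x
        + δ * deriv (fun y => Jfun ψ y t *
            deriv (fun z => Jfun ψ z t *
              deriv (fun r => Jfun ψ r t * deriv (fun s => wfun u ub γ ψ δM N s t) r) z) y) x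
        + wfun u ub γ ψ δM N x t * deriv (fun y => wfun u ub γ ψ δM N y t) x = 0 := by
  intro x t
  have hf : ContDiff ℝ (⊤ : ℕ∞) (fun y => u y t) :=
    hu.comp (contDiff_id.prodMk contDiff_const)
  have hψt : ContDiff ℝ (⊤ : ℕ∞) (fun y => ψ y t) :=
    hψ.comp (contDiff_id.prodMk contDiff_const)
  have hψτ : ContDiff ℝ (⊤ : ℕ∞) (fun τ => ψ x τ) :=
    hψ.comp (contDiff_const.prodMk contDiff_id)
  set f : ℝ → ℝ := fun y => u y t with hfdef
  open scoped ContDiff in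
  have h1inf : (1 : WithTop ℕ∞) ≤ ((⊤ : ℕ∞) : WithTop ℕ∞) := by exact_mod_cast le_top
  have hfi : ContDiff ℝ ((⊤ : ℕ∞) : WithTop ℕ∞) f := hf.of_le (by simp)
  have hf1 : ContDiff ℝ ((⊤ : ℕ∞) : WithTop ℕ∞) (deriv f) := (contDiff_infty_iff_deriv.mp hfi).2
  have hf2 : ContDiff ℝ ((⊤ : ℕ∞) : WithTop ℕ∞) (deriv (deriv f)) := (contDiff_infty_iff_deriv.mp hf1).2
  have hf3 : ContDiff ℝ ((⊤ : ℕ∞) : WithTop ℕ∞) (deriv (deriv (deriv f))) := (contDiff_infty_iff_deriv.mp hf2).2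
  set φf : ℝ → ℝ := fun y => y + δM * t - γ t / N - ψ y t with hφdef
  have hφ : ∀ y : ℝ, HasDerivAt φf (1 - deriv (fun z => ψ z t) y) y := by
    intro y
    have h1 : HasDerivAt (fun z : ℝ => z + δM * t - γ t / N) 1 y := by
      simpa using ((hasDerivAt_id y).add_const (δM * t)).sub_const (γ t / N)
    have h2 : HasDerivAt (fun z => ψ z t) (deriv (fun z => ψ z t) y) y :=
      (hψt.differentiable (by simp) y).hasDerivAt
    exact h1.sub h2
  have hpos : ∀ y : ℝ, (0:ℝ) < 1 - deriv (fun z => ψ z t) y := by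
    intro y; have := hψx y t; linarith
  have chain : ∀ g : ℝ → ℝ, Differentiable ℝ g → ∀ y : ℝ,
      HasDerivAt (fun z => g (φf z)) (deriv g (φf y) * (1 - deriv (fun z => ψ z t) y)) y := by
    intro g hg y
    exact ((hg (φf y)).hasDerivAt).comp y (hφ y)
  have Jcancel : ∀ g : ℝ → ℝ, Differentiable ℝ g →
      (fun y => Jfun ψ y t * deriv (fun z => g (φf z)) y) = fun y => deriv g (φf y) := by
    intro g hg
    funext y
    rw [(chain g hg y).deriv]
    have h0 : (1:ℝ) - deriv (fun z => ψ z t) y ≠ 0 := (hpos y).ne'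
    simp only [Jfun]
    rw [one_div, mul_comm, mul_assoc, mul_inv_cancel₀ h0, mul_one]
  have hw_eq : (fun y => wfun u ub γ ψ δM N y t) = fun z => f (φf z) - δM := by
    funext y
    simp only [wfun, pert, hfdef, hφdef]
    ring
  have hw_pt : wfun u ub γ ψ δM N x t = f (φf x) - δM := by
    have h := congrFun hw_eq x
    simpa using h
  have hJ0 : (fun y => Jfun ψ y t * deriv (fun z => f (φf z) - δM) y)
      = fun y => deriv f (φf y) := by
    funext y
    rw [((chain f (hf.differentiable (by simp)) y).sub_const δM).deriv]
    have h0 : (1:ℝ) - deriv (fun z => ψ z t) y ≠ 0 := (hpos y).ne'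
    simp only [Jfun]
    rw [one_div, mul_comm, mul_assoc, mul_inv_cancel₀ h0, mul_one]
  have h1c := Jcancel (deriv f) (hf1.differentiable (by simp))
  have h2c := Jcancel (deriv (deriv f)) (hf2.differentiable (by simp))
  simp only [hw_eq, hw_pt]
  simp only [hJ0]
  simp only [h1c]
  simp only [h2c]
  have hD0 : deriv (fun z => f (φf z) - δM) x
      = deriv f (φf x) * (1 - deriv (fun z => ψ z t) x) :=
    ((chain f (hf.differentiable (by simp)) x).sub_const δM).deriv
  have hD1 : deriv (fun y => deriv f (φf y)) x
      = deriv (deriv f) (φf x) * (1 - deriv (fun z => ψ z t) x) :=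
    (chain (deriv f) (hf1.differentiable (by simp)) x).deriv
  have hD2 : deriv (fun y => deriv (deriv f) (φf y)) x
      = deriv (deriv (deriv f)) (φf x) * (1 - deriv (fun z => ψ z t) x) :=
    (chain (deriv (deriv f)) (hf2.differentiable (by simp)) x).deriv
  have hD3 : deriv (fun y => deriv (deriv (deriv f)) (φf y)) x
      = deriv (deriv (deriv (deriv f))) (φf x) * (1 - deriv (fun z => ψ z t) x) :=
    (chain (deriv (deriv (deriv f))) (hf3.differentiable (by simp)) x).deriv
  -- time derivative
  have hb : HasDerivAt (fun τ => x + δM * τ - γ τ / N - ψ x τ)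
      (δM - deriv γ t / N - deriv (fun τ => ψ x τ) t) t := by
    have h1 : HasDerivAt (fun τ : ℝ => x + δM * τ) δM t := by
      simpa using ((hasDerivAt_id t).const_mul δM).const_add x
    have h2 : HasDerivAt γ (deriv γ t) t := (hγ.differentiable (by simp) t).hasDerivAt
    have h3 : HasDerivAt (fun τ => ψ x τ) (deriv (fun τ => ψ x τ) t) t :=
      (hψτ.differentiable (by simp) t).hasDerivAt
    exact (h1.sub (h2.div_const N)).sub h3
  have hU : HasFDerivAt (Function.uncurry u)
      (fderiv ℝ (Function.uncurry u) (φf x, t)) (φf x, t) :=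
    (hu.differentiable (by simp) (φf x, t)).hasFDerivAt
  set L := fderiv ℝ (Function.uncurry u) (φf x, t) with hLdef
  have hcomp : HasDerivAt (fun τ => u (x + δM * τ - γ τ / N - ψ x τ) τ)
      (L (δM - deriv γ t / N - deriv (fun τ => ψ x τ) t, 1)) t := by
    have hpair : HasDerivAt (fun τ : ℝ => ((x + δM * τ - γ τ / N - ψ x τ : ℝ), τ))
        ((δM - deriv γ t / N - deriv (fun τ => ψ x τ) t, 1) : ℝ × ℝ) t :=
      hb.prodMk (hasDerivAt_id t)
    exact hU.comp_hasDerivAt_of_eq (x := t) hpair rfl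
  have hp1 : HasDerivAt f (L (1, 0)) (φf x) := by
    have hpair : HasDerivAt (fun y : ℝ => (y, t)) ((1, 0) : ℝ × ℝ) (φf x) :=
      (hasDerivAt_id (φf x)).prodMk (hasDerivAt_const (φf x) t)
    exact hU.comp_hasDerivAt (φf x) hpair
  have hp2 : HasDerivAt (fun τ => u (φf x) τ) (L (0, 1)) t := by
    have hpair : HasDerivAt (fun τ : ℝ => ((φf x : ℝ), τ)) ((0, 1) : ℝ × ℝ) t :=
      (hasDerivAt_const t (φf x)).prodMk (hasDerivAt_id t)
    exact hU.comp_hasDerivAt t hpair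
  have hsplit : (L ((δM - deriv γ t / N - deriv (fun τ => ψ x τ) t, 1) : ℝ × ℝ))
      = (δM - deriv γ t / N - deriv (fun τ => ψ x τ) t) * L (1, 0) + L (0, 1) := by
    have hvec : ((δM - deriv γ t / N - deriv (fun τ => ψ x τ) t, 1) : ℝ × ℝ)
        = (δM - deriv γ t / N - deriv (fun τ => ψ x τ) t) • ((1, 0) : ℝ × ℝ)
          + ((0, 1) : ℝ × ℝ) := by
      simp [Prod.ext_iff]
    rw [hvec, map_add, map_smul, smul_eq_mul]
  have hDt : deriv (fun τ => pert u ub γ ψ δM N x τ) t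
      = deriv f (φf x) * (δM - deriv γ t / N - deriv (fun τ => ψ x τ) t)
        + deriv (fun τ => u (φf x) τ) t := by
    have hfun : (fun τ => pert u ub γ ψ δM N x τ)
        = fun τ => u (x + δM * τ - γ τ / N - ψ x τ) τ - δM - ub x := rfl
    rw [hfun, ((hcomp.sub_const δM).sub_const (ub x)).deriv, hsplit, ← hp1.deriv, ← hp2.deriv]
    ring
  rw [hD0, hD1, hD2, hD3, hDt]
  have heq' := heq (φf x) t
  simp only [iteratedDeriv_succ, iteratedDeriv_zero] at heq'
  have hupt : u (φf x) t = f (φf x) := rfl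
  rw [hupt] at heq'
  linear_combination (1 - deriv (fun z => ψ z t) x) * heq'
end
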